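/- In a 1-step decodable POMDP (where the latent state s_h is a deterministic function of the current observation o_h), the conditional next-observation distribution depends only on the current observation and action, so for any two model parameters and the PSR operators constructed from core tests Q_h = (O×A), the weight vector m₁((o,a)_{h+1:H}) = e_{(o,a)_{h+1}} · P̄((o,a)_{h+2:H} | (o,a)_{h+1}) satisfies, for any policy π that depends only on the future after step h: Σ_{(o,a)_{h+1:H}} |m₁((o,a)_{h+1:H})ᵀ e_{ω_h}| · π((o,a)_{h+1:H}) = π(ω_h) ≤ 1, for every core test ω_h ∈ Q_h. Consequently 1-step decodable POMDPs form 1-well-conditioned PSRs (γ = 1) with this representation. -/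
import Mathlib

/-- Unnormalized belief recursion: `belC k s' = P(o_{1:k}, s_{k+1} = s')` starting from
an initial (sub)distribution `init`, with step-indexed transitions and emissions. -/
noncomputable def belC {S O A : ℕ} (T : ℕ → Fin S → Fin A → Fin S → ℝ)
    (Ob : ℕ → Fin S → Fin O → ℝ) (init : Fin S → ℝ)
    (o : ℕ → Fin O) (a : ℕ → Fin A) : ℕ → Fin S → ℝ
  | 0 => init
  | k + 1 => fun s' => ∑ s, belC T Ob init o a k s * Ob k s (o k) * T k s (a k) s'

lemma belC_congr {S O A : ℕ} (T : ℕ → Fin S → Fin A → Fin S → ℝ)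
    (Ob : ℕ → Fin S → Fin O → ℝ) (init : Fin S → ℝ)
    (o o' : ℕ → Fin O) (a a' : ℕ → Fin A) (k : ℕ)
    (ho : ∀ j < k, o j = o' j) (ha : ∀ j < k, a j = a' j) :
    belC T Ob init o a k = belC T Ob init o' a' k := by
  induction k with
  | zero => rfl
  | succ n ih =>
    have h1 : belC T Ob init o a n = belC T Ob init o' a' n :=
      ih (fun j hj => ho j (hj.trans (Nat.lt_succ_self n)))
        (fun j hj => ha j (hj.trans (Nat.lt_succ_self n)))
    funext s'
    simp only [belC, h1, ho n (Nat.lt_succ_self n), ha n (Nat.lt_succ_self n)]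

/-- Core lemma: the total probability of futures weighted by a policy equals the
mass of the initial subdistribution. -/
lemma key_lemma {S O A : ℕ} (T : ℕ → Fin S → Fin A → Fin S → ℝ)
    (Ob : ℕ → Fin S → Fin O → ℝ)
    (hTsum : ∀ k s a, ∑ s', T k s a s' = 1) (hOsum : ∀ k s, ∑ o, Ob k s o = 1)
    (junk : Fin O × Fin A) :
    ∀ (m : ℕ) (μ : Fin S → ℝ) (p : Fin m → (Fin m → Fin O × Fin A) → ℝ),
    (∀ (h : Fin m) (g g' : Fin m → Fin O × Fin A),
      (∀ i : Fin m, (i : ℕ) ≤ (h : ℕ) → g i = g' i) → p h g = p h g') →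
    (∀ (h : Fin m) (g : Fin m → Fin O × Fin A),
      ∑ b : Fin A, p h (Function.update g h ((g h).1, b)) = 1) →
    ∑ g : Fin m → Fin O × Fin A,
      (∑ s, belC T Ob μ (fun k => (if h : k < m then g ⟨k, h⟩ else junk).1)
        (fun k => (if h : k < m then g ⟨k, h⟩ else junk).2) m s) * ∏ h, p h g
      = ∑ s, μ s := by
  intro m
  induction m with
  | zero =>
    intro μ p _ _
    rw [Fintype.sum_unique]
    simp only [Finset.univ_eq_empty, Finset.prod_empty, mul_one]; rfl
  | succ n ih =>
    intro μ p hppre hpnorm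
    rw [← Equiv.sum_comp (Fin.snocEquiv fun _ => Fin O × Fin A), Fintype.sum_prod_type]
    set oF : (Fin n → Fin O × Fin A) → ℕ → Fin O :=
      fun g k => (if h : k < n then g ⟨k, h⟩ else junk).1 with hoF
    set aF : (Fin n → Fin O × Fin A) → ℕ → Fin A :=
      fun g k => (if h : k < n then g ⟨k, h⟩ else junk).2 with haF
    set q : Fin n → (Fin n → Fin O × Fin A) → ℝ :=
      fun h g => p h.castSucc (Fin.snoc g junk) with hq
    have hcongr : ∀ (x : Fin O × Fin A) (g : Fin n → Fin O × Fin A),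
        belC T Ob μ
          (fun k => (if h : k < n + 1 then (Fin.snoc g x : Fin (n+1) → Fin O × Fin A) ⟨k, h⟩ else junk).1)
          (fun k => (if h : k < n + 1 then (Fin.snoc g x : Fin (n+1) → Fin O × Fin A) ⟨k, h⟩ else junk).2) n
        = belC T Ob μ (oF g) (aF g) n := by
      intro x g
      apply belC_congr
      · intro j hj
        have hj1 : j < n + 1 := hj.trans (Nat.lt_succ_self n)
        simp only [dif_pos hj1, dif_pos hj, hoF]
        have h2 : (⟨j, hj1⟩ : Fin (n+1)) = Fin.castSucc ⟨j, hj⟩ := rfl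
        rw [h2, Fin.snoc_castSucc]
      · intro j hj
        have hj1 : j < n + 1 := hj.trans (Nat.lt_succ_self n)
        simp only [dif_pos hj1, dif_pos hj, haF]
        have h2 : (⟨j, hj1⟩ : Fin (n+1)) = Fin.castSucc ⟨j, hj⟩ := rfl
        rw [h2, Fin.snoc_castSucc]
    have hbel : ∀ (x : Fin O × Fin A) (g : Fin n → Fin O × Fin A),
        (∑ s, belC T Ob μ
          (fun k => (if h : k < n + 1 then (Fin.snoc g x : Fin (n+1) → Fin O × Fin A) ⟨k, h⟩ else junk).1)
          (fun k => (if h : k < n + 1 then (Fin.snoc g x : Fin (n+1) → Fin O × Fin A) ⟨k, h⟩ else junk).2) (n+1) s)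
        = ∑ s, belC T Ob μ (oF g) (aF g) n s * Ob n s x.1 := by
      intro x g
      simp only [belC]
      rw [Finset.sum_comm]
      refine Finset.sum_congr rfl fun s _ => ?_
      rw [← Finset.mul_sum, hTsum, mul_one, hcongr x g]
      have h1 : (if h : n < n + 1 then (Fin.snoc g x : Fin (n+1) → Fin O × Fin A) ⟨n, h⟩ else junk).1 = x.1 := by
        rw [dif_pos (Nat.lt_succ_self n)]
        have h2 : (⟨n, Nat.lt_succ_self n⟩ : Fin (n+1)) = Fin.last n := rfl
        rw [h2, Fin.snoc_last]
      rw [h1]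
    have hprod : ∀ (x : Fin O × Fin A) (g : Fin n → Fin O × Fin A),
        ∏ h : Fin (n+1), p h (Fin.snoc g x)
        = (∏ h : Fin n, q h g) * p (Fin.last n) (Fin.snoc g x) := by
      intro x g
      rw [Fin.prod_univ_castSucc]
      congr 1
      refine Finset.prod_congr rfl fun h _ => ?_
      refine (hppre h.castSucc _ _ fun i hi => ?_).symm
      have hin : (i : ℕ) < n := lt_of_le_of_lt hi h.2
      have h2 : i = Fin.castSucc ⟨i, hin⟩ := rfl
      rw [h2, Fin.snoc_castSucc, Fin.snoc_castSucc]
    have hlast : ∀ (g : Fin n → Fin O × Fin A) (ox : Fin O),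
        ∑ b : Fin A, p (Fin.last n) (Fin.snoc g (ox, b)) = 1 := by
      intro g ox
      have := hpnorm (Fin.last n) (Fin.snoc g (ox, junk.2))
      have h2 : ∀ b : Fin A,
          Function.update (Fin.snoc g (ox, junk.2) : Fin (n+1) → Fin O × Fin A)
            (Fin.last n)
            (((Fin.snoc g (ox, junk.2) : Fin (n+1) → Fin O × Fin A) (Fin.last n)).1, b)
          = Fin.snoc g (ox, b) := by
        intro b
        rw [Fin.update_snoc_last, Fin.snoc_last]
      rw [Finset.sum_congr rfl fun b _ => congrArg _ (h2 b)] at this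
      exact this
    have hmain : ∀ g : Fin n → Fin O × Fin A,
        ∑ x : Fin O × Fin A,
          (∑ s, belC T Ob μ (oF g) (aF g) n s * Ob n s x.1)
            * ((∏ h : Fin n, q h g) * p (Fin.last n) (Fin.snoc g x))
        = (∑ s, belC T Ob μ (oF g) (aF g) n s) * ∏ h : Fin n, q h g := by
      intro g
      rw [Fintype.sum_prod_type]
      have step : ∀ ox : Fin O,
          ∑ b : Fin A,
            (∑ s, belC T Ob μ (oF g) (aF g) n s * Ob n s ox)
              * ((∏ h : Fin n, q h g) * p (Fin.last n) (Fin.snoc g (ox, b)))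
          = (∑ s, belC T Ob μ (oF g) (aF g) n s * Ob n s ox) * ∏ h : Fin n, q h g := by
        intro ox
        rw [← Finset.mul_sum, ← Finset.mul_sum, hlast g ox, mul_one]
      rw [Finset.sum_congr rfl fun ox _ => step ox, ← Finset.sum_mul]
      congr 1
      rw [Finset.sum_comm]
      rw [Finset.sum_congr rfl fun s _ => by rw [← Finset.mul_sum, hOsum, mul_one]]
    calc ∑ x : Fin O × Fin A, ∑ g : Fin n → Fin O × Fin A,
          (∑ s, belC T Ob μ
            (fun k => (if h : k < n + 1 then
              (Fin.snocEquiv fun _ => Fin O × Fin A) (x, g) ⟨k, h⟩ else junk).1)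
            (fun k => (if h : k < n + 1 then
              (Fin.snocEquiv fun _ => Fin O × Fin A) (x, g) ⟨k, h⟩ else junk).2) (n+1) s)
            * ∏ h, p h ((Fin.snocEquiv fun _ => Fin O × Fin A) (x, g))
        = ∑ g : Fin n → Fin O × Fin A, ∑ x : Fin O × Fin A,
          (∑ s, belC T Ob μ (oF g) (aF g) n s * Ob n s x.1)
            * ((∏ h : Fin n, q h g) * p (Fin.last n) (Fin.snoc g x)) := by
          rw [Finset.sum_comm]
          refine Finset.sum_congr rfl fun g _ => Finset.sum_congr rfl fun x _ => ?_
          have he : (Fin.snocEquiv fun _ => Fin O × Fin A) (x, g) = Fin.snoc g x := rfl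
          rw [he, hbel x g, hprod x g]
      _ = ∑ g : Fin n → Fin O × Fin A,
            (∑ s, belC T Ob μ (oF g) (aF g) n s) * ∏ h : Fin n, q h g := by
          exact Finset.sum_congr rfl fun g _ => hmain g
      _ = ∑ s, μ s := by
          refine ih μ q ?_ ?_
          · intro h g g' hgg
            refine hppre h.castSucc _ _ fun i hi => ?_
            have hin : (i : ℕ) < n := lt_of_le_of_lt hi h.2
            have h2 : i = Fin.castSucc ⟨i, hin⟩ := rfl
            rw [h2, Fin.snoc_castSucc, Fin.snoc_castSucc]
            exact hgg _ hi
          · intro h g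
            have key : ∀ b : Fin A,
                q h (Function.update g h ((g h).1, b))
                = p h.castSucc (Function.update (Fin.snoc g junk) h.castSucc
                    (((Fin.snoc g junk : Fin (n+1) → Fin O × Fin A) h.castSucc).1, b)) := by
              intro b
              simp only [hq]
              congr 1
              rw [Fin.snoc_update, Fin.snoc_castSucc]
            rw [Finset.sum_congr rfl fun b _ => key b]
            exact hpnorm h.castSucc (Fin.snoc g junk)

/-- In a 1-step decodable POMDP (the decoder `ζ` recovers the latent state from the
current observation), the PSR weight vectors
`m₁((o,a)_{h+1:H}) = e_{(o,a)_{h+1}} · P̄((o,a)_{h+2:H} | (o,a)_{h+1})` satisfy, for any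
policy `π` over the future of length `L = H − h` and any core test `ω ∈ O × A`,
`Σ_futures |m₁ᵀ e_ω| · π(future) = π(ω) ≤ 1`; hence 1-step decodable POMDPs are
1-well-conditioned PSRs. -/
theorem decodable_pomdp_well_conditioned {S O A L : ℕ} (hL : 0 < L)
    (T : ℕ → Fin S → Fin A → Fin S → ℝ) (Ob : ℕ → Fin S → Fin O → ℝ)
    (hTpos : ∀ k s a s', 0 ≤ T k s a s') (hTsum : ∀ k s a, ∑ s', T k s a s' = 1)
    (hOpos : ∀ k s o, 0 ≤ Ob k s o) (hOsum : ∀ k s, ∑ o, Ob k s o = 1)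
    (ζ : Fin O → Fin S)
    (hdec : ∀ k s o, 0 < Ob k s o → ζ o = s)
    (π : Fin L → (Fin L → Fin O × Fin A) → ℝ)
    (hπpos : ∀ h f, 0 ≤ π h f)
    (hπpre : ∀ (h : Fin L) (f f' : Fin L → Fin O × Fin A),
      (∀ i : Fin L, (i : ℕ) ≤ (h : ℕ) → f i = f' i) → π h f = π h f')
    (hπnorm : ∀ (h : Fin L) (f : Fin L → Fin O × Fin A),
      ∑ b : Fin A, π h (Function.update f h ((f h).1, b)) = 1) :
    ∀ ω : Fin O × Fin A,
      (∑ f : Fin L → Fin O × Fin A,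
        (if f ⟨0, hL⟩ = ω then
          -- P̄((o,a)_{2:L} | ω): probability of the remaining observations given the
          -- remaining actions, starting from the state decoded as ζ(ω.1) and action ω.2
          ∑ s, belC (fun k => T (k + 1)) (fun k => Ob (k + 1))
            (fun s' => T 0 (ζ ω.1) ω.2 s')
            (fun k => (if h : k + 1 < L then f ⟨k + 1, h⟩ else ω).1)
            (fun k => (if h : k + 1 < L then f ⟨k + 1, h⟩ else ω).2)
            (L - 1) s
        else 0) * ∏ h, π h f)
        = π ⟨0, hL⟩ (fun _ => ω) ∧
      π ⟨0, hL⟩ (fun _ => ω) ≤ 1 := by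
  intro ω
  constructor
  · obtain ⟨n, rfl⟩ : ∃ n, L = n + 1 := ⟨L - 1, (Nat.succ_pred_eq_of_pos hL).symm⟩
    rw [← Equiv.sum_comp (Fin.consEquiv fun _ => Fin O × Fin A), Fintype.sum_prod_type]
    simp only [Fin.consEquiv_apply]
    have hterm : ∀ (x : Fin O × Fin A) (y : Fin n → Fin O × Fin A),
        (if (Fin.cons x y : Fin (n+1) → Fin O × Fin A) ⟨0, hL⟩ = ω then
          ∑ s, belC (fun k => T (k + 1)) (fun k => Ob (k + 1))
            (fun s' => T 0 (ζ ω.1) ω.2 s')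
            (fun k => (if h : k + 1 < n + 1 then
              (Fin.cons x y : Fin (n+1) → Fin O × Fin A) ⟨k + 1, h⟩ else ω).1)
            (fun k => (if h : k + 1 < n + 1 then
              (Fin.cons x y : Fin (n+1) → Fin O × Fin A) ⟨k + 1, h⟩ else ω).2)
            (n + 1 - 1) s
        else 0) * ∏ h, π h (Fin.cons x y)
        = if x = ω then
            (∑ s, belC (fun k => T (k + 1)) (fun k => Ob (k + 1))
              (fun s' => T 0 (ζ ω.1) ω.2 s')
              (fun k => (if h : k < n then y ⟨k, h⟩ else ω).1)
              (fun k => (if h : k < n then y ⟨k, h⟩ else ω).2) n s)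
            * ((π ⟨0, hL⟩ fun _ => ω) * ∏ h : Fin n, π h.succ (Fin.cons ω y))
          else 0 := by
      intro x y
      have h0 : (Fin.cons x y : Fin (n+1) → Fin O × Fin A) ⟨0, hL⟩ = x := by
        rw [show (⟨0, hL⟩ : Fin (n+1)) = 0 from rfl, Fin.cons_zero]
      rw [h0]
      by_cases hx : x = ω
      · rw [if_pos hx, if_pos hx, hx]
        congr 1
        · have hbc : belC (fun k => T (k + 1)) (fun k => Ob (k + 1))
              (fun s' => T 0 (ζ ω.1) ω.2 s')
              (fun k => (if h : k + 1 < n + 1 then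
                (Fin.cons ω y : Fin (n+1) → Fin O × Fin A) ⟨k + 1, h⟩ else ω).1)
              (fun k => (if h : k + 1 < n + 1 then
                (Fin.cons ω y : Fin (n+1) → Fin O × Fin A) ⟨k + 1, h⟩ else ω).2) n
              = belC (fun k => T (k + 1)) (fun k => Ob (k + 1))
                (fun s' => T 0 (ζ ω.1) ω.2 s')
                (fun k => (if h : k < n then y ⟨k, h⟩ else ω).1)
                (fun k => (if h : k < n then y ⟨k, h⟩ else ω).2) n := by
            apply belC_congr
            · intro j hj
              have hj1 : j + 1 < n + 1 := Nat.succ_lt_succ hj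
              simp only [dif_pos hj1, dif_pos hj,
                show (⟨j + 1, hj1⟩ : Fin (n+1)) = Fin.succ ⟨j, hj⟩ from rfl,
                Fin.cons_succ]
            · intro j hj
              have hj1 : j + 1 < n + 1 := Nat.succ_lt_succ hj
              simp only [dif_pos hj1, dif_pos hj,
                show (⟨j + 1, hj1⟩ : Fin (n+1)) = Fin.succ ⟨j, hj⟩ from rfl,
                Fin.cons_succ]
          rw [show n + 1 - 1 = n from rfl, hbc]
        · rw [Fin.prod_univ_succ]
          congr 1
          refine hπpre _ _ _ fun i hi => ?_
          have h2 : i = (0 : Fin (n+1)) := Fin.ext (Nat.le_zero.mp hi)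
          rw [h2, Fin.cons_zero]
      · rw [if_neg hx, if_neg hx, zero_mul]
    refine Eq.trans (Finset.sum_congr rfl fun x _ =>
      Finset.sum_congr rfl fun y _ => hterm x y) ?_
    have hsplit : ∀ x : Fin O × Fin A, (∑ y : Fin n → Fin O × Fin A,
        if x = ω then
          (∑ s, belC (fun k => T (k + 1)) (fun k => Ob (k + 1))
            (fun s' => T 0 (ζ ω.1) ω.2 s')
            (fun k => (if h : k < n then y ⟨k, h⟩ else ω).1)
            (fun k => (if h : k < n then y ⟨k, h⟩ else ω).2) n s)
          * ((π ⟨0, hL⟩ fun _ => ω) * ∏ h : Fin n, π h.succ (Fin.cons ω y))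
        else 0)
        = if x = ω then
            ∑ y : Fin n → Fin O × Fin A,
              (∑ s, belC (fun k => T (k + 1)) (fun k => Ob (k + 1))
                (fun s' => T 0 (ζ ω.1) ω.2 s')
                (fun k => (if h : k < n then y ⟨k, h⟩ else ω).1)
                (fun k => (if h : k < n then y ⟨k, h⟩ else ω).2) n s)
              * ((π ⟨0, hL⟩ fun _ => ω) * ∏ h : Fin n, π h.succ (Fin.cons ω y))
          else 0 := by
      intro x; split <;> simp
    refine Eq.trans (Finset.sum_congr rfl fun x _ => hsplit x) ?_
    rw [Finset.sum_ite_eq' Finset.univ ω, if_pos (Finset.mem_univ ω)]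
    have hkey : ∑ y : Fin n → Fin O × Fin A,
        (∑ s, belC (fun k => T (k + 1)) (fun k => Ob (k + 1))
          (fun s' => T 0 (ζ ω.1) ω.2 s')
          (fun k => (if h : k < n then y ⟨k, h⟩ else ω).1)
          (fun k => (if h : k < n then y ⟨k, h⟩ else ω).2) n s)
        * ∏ h : Fin n, π h.succ (Fin.cons ω y)
        = ∑ s, T 0 (ζ ω.1) ω.2 s := by
      refine key_lemma (fun k => T (k + 1)) (fun k => Ob (k + 1))
        (fun k s a => hTsum (k + 1) s a) (fun k s => hOsum (k + 1) s) ω n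
        (fun s' => T 0 (ζ ω.1) ω.2 s')
        (fun h y => π h.succ (Fin.cons ω y)) ?_ ?_
      · intro h g g' hgg
        refine hπpre h.succ _ _ fun i hi => ?_
        rcases Fin.eq_zero_or_eq_succ i with h2 | ⟨j, h2⟩
        · rw [h2, Fin.cons_zero, Fin.cons_zero]
        · rw [h2, Fin.cons_succ, Fin.cons_succ]
          refine hgg j ?_
          have h3 : (j : ℕ) + 1 ≤ (h : ℕ) + 1 := by rw [h2] at hi; exact hi
          omega
      · intro h g
        have key2 : ∀ b : Fin A,
            π h.succ (Fin.cons ω (Function.update g h ((g h).1, b)))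
            = π h.succ (Function.update (Fin.cons ω g) h.succ
                (((Fin.cons ω g : Fin (n+1) → Fin O × Fin A) h.succ).1, b)) := by
          intro b
          congr 1
          rw [Fin.cons_update, Fin.cons_succ]
        rw [Finset.sum_congr rfl fun b _ => key2 b]
        exact hπnorm h.succ (Fin.cons ω g)
    calc ∑ y : Fin n → Fin O × Fin A,
          (∑ s, belC (fun k => T (k + 1)) (fun k => Ob (k + 1))
            (fun s' => T 0 (ζ ω.1) ω.2 s')
            (fun k => (if h : k < n then y ⟨k, h⟩ else ω).1)
            (fun k => (if h : k < n then y ⟨k, h⟩ else ω).2) n s)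
          * ((π ⟨0, hL⟩ fun _ => ω) * ∏ h : Fin n, π h.succ (Fin.cons ω y))
        = (π ⟨0, hL⟩ fun _ => ω) * ∑ y : Fin n → Fin O × Fin A,
            (∑ s, belC (fun k => T (k + 1)) (fun k => Ob (k + 1))
              (fun s' => T 0 (ζ ω.1) ω.2 s')
              (fun k => (if h : k < n then y ⟨k, h⟩ else ω).1)
              (fun k => (if h : k < n then y ⟨k, h⟩ else ω).2) n s)
            * ∏ h : Fin n, π h.succ (Fin.cons ω y) := by
          rw [Finset.mul_sum]
          exact Finset.sum_congr rfl fun y _ => by ring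
      _ = π ⟨0, hL⟩ fun _ => ω := by
          rw [hkey, hTsum 0 (ζ ω.1) ω.2, mul_one]
  · have hn := hπnorm ⟨0, hL⟩ (fun _ => ω)
    have hterm : Function.update (fun _ => ω) (⟨0, hL⟩ : Fin L)
        (((fun _ : Fin L => ω) ⟨0, hL⟩).1, ω.2) = (fun _ => ω) := by
      funext i
      rcases eq_or_ne i ⟨0, hL⟩ with h | h
      · subst h; rw [Function.update_self]
      · rw [Function.update_of_ne h]
    calc π ⟨0, hL⟩ (fun _ => ω)
        = π ⟨0, hL⟩ (Function.update (fun _ => ω) ⟨0, hL⟩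
            (((fun _ : Fin L => ω) ⟨0, hL⟩).1, ω.2)) := by rw [hterm]
      _ ≤ ∑ b : Fin A, π ⟨0, hL⟩ (Function.update (fun _ => ω) ⟨0, hL⟩
            (((fun _ : Fin L => ω) ⟨0, hL⟩).1, b)) := by
          exact Finset.single_le_sum (f := fun b : Fin A => π ⟨0, hL⟩ (Function.update (fun _ => ω) ⟨0, hL⟩ (((fun _ : Fin L => ω) ⟨0, hL⟩).1, b))) (fun b _ => hπpos _ _) (Finset.mem_univ ω.2)
      _ = 1 := hn
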